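/- arXiv:2209.07308 — 2 statements merged into one kernel-verified Lean document; each statement's English description precedes it below -/
import Mathlib

section
/- Let η = η_A ⊗ η_B with η_A, η_B Hermitian invertible, and let ψ be a vector with ⟨ψ, ηψ⟩ ≠ 0. Define T = |ψ⟩⟨ψ|η / ⟨ψ|η|ψ⟩ and T_A = tr_B(T). Then T_A = T̃_A · η_A where T̃_A := tr_B(|ψ⟩⟨ψ|(1 ⊗ η_B)) / ⟨ψ|η|ψ⟩ is Hermitian. -/
/-!
Writing `η_A ⊗ η_B = (1 ⊗ η_B)(η_A ⊗ 1)`, the factor `η_A ⊗ 1` passes through `tr_B` as a right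
factor `η_A`. Hermiticity of `T̃_A` holds because `1 ⊗ η_B` may be moved cyclically under `tr_B`,
so `tr_B(|ψ⟩⟨ψ|(1 ⊗ η_B))ᴴ = tr_B((1 ⊗ η_B)|ψ⟩⟨ψ|) = tr_B(|ψ⟩⟨ψ|(1 ⊗ η_B))`, and because
`⟨ψ|η|ψ⟩` is real.
-/

open Matrix Kronecker

/-- Partial trace over the second tensor factor. -/
noncomputable def trB {α β : Type*} [Fintype β]
    (X : Matrix (α × β) (α × β) ℂ) : Matrix α α ℂ :=
  Matrix.of fun a a' => ∑ b : β, X (a, b) (a', b)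

theorem Matrix.IsHermitian.kronecker {R ι κ : Type*} [CommMagma R] [StarMul R]
    {A : Matrix ι ι R} {B : Matrix κ κ R}
    (hA : A.IsHermitian) (hB : B.IsHermitian) : (A ⊗ₖ B).IsHermitian := by
  rw [IsHermitian, conjTranspose_kronecker, hA.eq, hB.eq]

theorem Matrix.isHermitian_vecMulVec_star {R ι : Type*} [Mul R] [StarMul R] (x : ι → R) :
    (vecMulVec x (star x)).IsHermitian := by
  rw [IsHermitian, conjTranspose_vecMulVec, star_star]

theorem Matrix.IsHermitian.isSelfAdjoint_star_dotProduct_mulVec_self {𝕜 n : Type*}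
    [RCLike 𝕜] [Fintype n] {M : Matrix n n 𝕜} (hM : M.IsHermitian) (x : n → 𝕜) :
    IsSelfAdjoint (star x ⬝ᵥ M *ᵥ x) :=
  RCLike.conj_eq_iff_im.mpr (hM.im_star_dotProduct_mulVec_self x)

section PartialTrace

variable {α β : Type*} [Fintype α] [Fintype β]

omit [Fintype α] in
theorem trB_smul (c : ℂ) (X : Matrix (α × β) (α × β) ℂ) : trB (c • X) = c • trB X := by
  ext a a'
  simp [trB, Finset.mul_sum]

omit [Fintype α] in
theorem trB_conjTranspose (X : Matrix (α × β) (α × β) ℂ) : trB Xᴴ = (trB X)ᴴ := by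
  ext a a'
  simp [trB]

theorem trB_mul_kronecker_one [DecidableEq β] (X : Matrix (α × β) (α × β) ℂ)
    (A : Matrix α α ℂ) : trB (X * (A ⊗ₖ (1 : Matrix β β ℂ))) = trB X * A := by
  ext a a'
  simp only [trB, of_apply, mul_apply, kroneckerMap_apply, one_apply, Fintype.sum_prod_type,
    mul_ite, mul_one, mul_zero, Finset.sum_ite_eq', Finset.mem_univ, if_true, Finset.sum_mul]
  exact Finset.sum_comm

theorem trB_mul_one_kronecker_comm [DecidableEq α] (X : Matrix (α × β) (α × β) ℂ)
    (B : Matrix β β ℂ) :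
    trB (X * ((1 : Matrix α α ℂ) ⊗ₖ B)) = trB (((1 : Matrix α α ℂ) ⊗ₖ B) * X) := by
  ext a a'
  simp only [trB, of_apply, mul_apply, kroneckerMap_apply, one_apply, Fintype.sum_prod_type,
    ite_mul, mul_ite, one_mul, zero_mul, mul_zero, Finset.sum_ite_irrel, Finset.sum_const_zero,
    Finset.sum_ite_eq', Finset.sum_ite_eq, Finset.mem_univ, if_true]
  rw [Finset.sum_comm]
  exact Finset.sum_congr rfl fun _ _ => Finset.sum_congr rfl fun _ _ => mul_comm _ _

theorem trB_mul_kronecker [DecidableEq α] [DecidableEq β] (X : Matrix (α × β) (α × β) ℂ)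
    (A : Matrix α α ℂ) (B : Matrix β β ℂ) :
    trB (X * (A ⊗ₖ B)) = trB (X * ((1 : Matrix α α ℂ) ⊗ₖ B)) * A := by
  have hsplit : A ⊗ₖ B = ((1 : Matrix α α ℂ) ⊗ₖ B) * (A ⊗ₖ (1 : Matrix β β ℂ)) := by
    rw [← mul_kronecker_mul, one_mul, mul_one]
  rw [hsplit, ← Matrix.mul_assoc, trB_mul_kronecker_one]

theorem Matrix.IsHermitian.trB_mul_one_kronecker [DecidableEq α]
    {X : Matrix (α × β) (α × β) ℂ} {B : Matrix β β ℂ} (hX : X.IsHermitian)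
    (hB : B.IsHermitian) : (trB (X * ((1 : Matrix α α ℂ) ⊗ₖ B))).IsHermitian := by
  rw [IsHermitian, ← trB_conjTranspose, conjTranspose_mul, hX.eq,
    (isHermitian_one.kronecker hB).eq, trB_mul_one_kronecker_comm]

end PartialTrace

theorem reduced_transition_matrix_factorization_general {m k : ℕ}
    (ηA : Matrix (Fin m) (Fin m) ℂ) (ηB : Matrix (Fin k) (Fin k) ℂ)
    (hηA : ηA.IsHermitian) (hηB : ηB.IsHermitian)
    (ψ : Fin m × Fin k → ℂ) :
    let c : ℂ := star ψ ⬝ᵥ (ηA ⊗ₖ ηB).mulVec ψ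
    let T : Matrix (Fin m × Fin k) (Fin m × Fin k) ℂ :=
      c⁻¹ • (vecMulVec ψ (star ψ) * (ηA ⊗ₖ ηB))
    let tildeTA : Matrix (Fin m) (Fin m) ℂ :=
      c⁻¹ • trB (vecMulVec ψ (star ψ) * ((1 : Matrix (Fin m) (Fin m) ℂ) ⊗ₖ ηB))
    trB T = tildeTA * ηA ∧ tildeTA.IsHermitian := by
  intro c T tildeTA
  refine ⟨?_, ?_⟩
  · rw [trB_smul, trB_mul_kronecker, smul_mul_assoc]
  · exact ((isHermitian_vecMulVec_star ψ).trB_mul_one_kronecker hηB).smul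
      ((hηA.kronecker hηB).isSelfAdjoint_star_dotProduct_mulVec_self ψ).inv₀

/-- For `η = η_A ⊗ η_B` Hermitian and `⟨ψ|η|ψ⟩ ≠ 0`, the reduced transition matrix
`T_A = tr_B(|ψ⟩⟨ψ|η/⟨ψ|η|ψ⟩)` factors as `T̃_A · η_A` with
`T̃_A = tr_B(|ψ⟩⟨ψ|(1 ⊗ η_B))/⟨ψ|η|ψ⟩` Hermitian. -/
theorem reduced_transition_matrix_factorization {m k : ℕ}
    (ηA : Matrix (Fin m) (Fin m) ℂ) (ηB : Matrix (Fin k) (Fin k) ℂ)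
    (hηA : ηA.IsHermitian) (hηB : ηB.IsHermitian)
    (hA : IsUnit ηA.det) (hB : IsUnit ηB.det)
    (ψ : Fin m × Fin k → ℂ)
    (hψ : star ψ ⬝ᵥ (ηA ⊗ₖ ηB).mulVec ψ ≠ 0) :
    let c : ℂ := star ψ ⬝ᵥ (ηA ⊗ₖ ηB).mulVec ψ
    let T : Matrix (Fin m × Fin k) (Fin m × Fin k) ℂ :=
      c⁻¹ • (vecMulVec ψ (star ψ) * (ηA ⊗ₖ ηB))
    let tildeTA : Matrix (Fin m) (Fin m) ℂ :=
      c⁻¹ • trB (vecMulVec ψ (star ψ) * ((1 : Matrix (Fin m) (Fin m) ℂ) ⊗ₖ ηB))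
    trB T = tildeTA * ηA ∧ tildeTA.IsHermitian :=
  reduced_transition_matrix_factorization_general ηA ηB hηA hηB ψ
end

section
/- If both η_A and η_B are negative definite Hermitian operators and η = η_A ⊗ η_B, then for any ψ with ⟨ψ, ηψ⟩ ≠ 0, the eigenvalues of T_A := tr_B(|ψ⟩⟨ψ|η)/⟨ψ|η|ψ⟩ are nonnegative real numbers. -/
open Matrix Kronecker ComplexOrder

/-!
Reshape `ψ` into the `m × k` matrix `Ψ`; then `tr_B(|ψ⟩⟨ψ|η) = Ψ η_Bᵀ Ψᴴ η_A`, so `T_A` is the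
product of the positive semidefinite matrices `⟨ψ|η|ψ⟩⁻¹ (-Ψ η_Bᵀ Ψᴴ)` and `-η_A` (the scalar is
nonnegative because `η = (-η_A) ⊗ (-η_B)` is positive semidefinite). For positive semidefinite `P`
and `Q = Cᴴ C`, the nonzero spectrum of `P Q = (P Cᴴ) C` is that of `C P Cᴴ`, which is positive
semidefinite.
-/

open scoped MatrixOrder in
theorem Matrix.PosSemidef.nonneg_of_mem_spectrum_mul {𝕜 n : Type*} [RCLike 𝕜] [Fintype n]
    [DecidableEq n] {A B : Matrix n n 𝕜} (hA : A.PosSemidef) (hB : B.PosSemidef) {μ : 𝕜}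
    (hμ : μ ∈ spectrum 𝕜 (A * B)) : 0 ≤ μ := by
  obtain ⟨C, rfl⟩ := CStarAlgebra.nonneg_iff_eq_star_mul_self.mp hB.nonneg
  rcases eq_or_ne μ 0 with rfl | hμ0
  · exact le_rfl
  have hμ' : μ ∈ spectrum 𝕜 (C * (A * star C)) := by
    have h : μ ∈ spectrum 𝕜 (A * star C * C) \ {0} := ⟨by rwa [mul_assoc], hμ0⟩
    exact (spectrum.nonzero_mul_comm (𝕜 := 𝕜) (A * star C) C ▸ h).1
  rw [star_eq_conjTranspose, ← mul_assoc] at hμ'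
  exact (posSemidef_iff_isHermitian_and_spectrum_nonneg.mp (hA.mul_mul_conjTranspose_same C)).2 hμ'

theorem Matrix.neg_kronecker_neg {R l m n p : Type*} [Ring R] (A : Matrix l m R)
    (B : Matrix n p R) : (-A) ⊗ₖ (-B) = A ⊗ₖ B := by
  ext ⟨a, b⟩ ⟨a', b'⟩
  simp

theorem trB_vecMulVec_mul_kronecker {α β : Type*} [Fintype α] [Fintype β]
    (ψ : α × β → ℂ) (A : Matrix α α ℂ) (B : Matrix β β ℂ) :
    trB (vecMulVec ψ (star ψ) * (A ⊗ₖ B)) =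
      of (Function.curry ψ) * Bᵀ * (of (Function.curry ψ))ᴴ * A := by
  ext a a'
  simp only [trB, Matrix.of_apply, Matrix.mul_apply, vecMulVec_apply, kroneckerMap_apply,
    conjTranspose_apply, transpose_apply, Fintype.sum_prod_type, Pi.star_apply, Function.curry_apply,
    Finset.sum_mul]
  rw [Finset.sum_comm]
  refine Finset.sum_congr rfl fun b _ => ?_
  rw [Finset.sum_comm]
  refine Finset.sum_congr rfl fun a'' _ => Finset.sum_congr rfl fun b'' _ => ?_
  ring

theorem eigenvalues_nonneg_of_negDef_factors_general {m k : ℕ}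
    (ηA : Matrix (Fin m) (Fin m) ℂ) (ηB : Matrix (Fin k) (Fin k) ℂ)
    (hηA : (-ηA).PosDef) (hηB : (-ηB).PosDef)
    (ψ : Fin m × Fin k → ℂ) :
    let TA : Matrix (Fin m) (Fin m) ℂ :=
      (star ψ ⬝ᵥ (ηA ⊗ₖ ηB).mulVec ψ)⁻¹ •
        trB (vecMulVec ψ (star ψ) * (ηA ⊗ₖ ηB))
    ∀ μ ∈ spectrum ℂ TA, ∃ r : ℝ, 0 ≤ r ∧ μ = (r : ℂ) := by
  intro TA μ hμ
  set Ψ : Matrix (Fin m) (Fin k) ℂ := of (Function.curry ψ)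
  have hc : 0 ≤ star ψ ⬝ᵥ (ηA ⊗ₖ ηB) *ᵥ ψ :=
    neg_kronecker_neg ηA ηB ▸ (hηA.posSemidef.kronecker hηB.posSemidef).dotProduct_mulVec_nonneg ψ
  have hN : (-(Ψ * ηBᵀ * Ψᴴ)).PosSemidef := by
    simpa using hηB.posSemidef.transpose.mul_mul_conjTranspose_same Ψ
  have hTA : TA = ((star ψ ⬝ᵥ (ηA ⊗ₖ ηB) *ᵥ ψ)⁻¹ • -(Ψ * ηBᵀ * Ψᴴ)) * -ηA := by
    simp only [TA, trB_vecMulVec_mul_kronecker, smul_mul_assoc, neg_mul_neg, Ψ]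
  obtain ⟨r, hr, rfl⟩ := RCLike.nonneg_iff_exists_ofReal.mp <|
    (hN.smul (inv_nonneg_of_nonneg hc)).nonneg_of_mem_spectrum_mul hηA.posSemidef (hTA ▸ hμ)
  exact ⟨r, hr, rfl⟩

/-- For negative definite `η_A, η_B` and `⟨ψ|η|ψ⟩ ≠ 0` with `η = η_A ⊗ η_B`,
all eigenvalues of `T_A = tr_B(|ψ⟩⟨ψ|η)/⟨ψ|η|ψ⟩` are nonnegative reals. -/
theorem eigenvalues_nonneg_of_negDef_factors {m k : ℕ}
    (ηA : Matrix (Fin m) (Fin m) ℂ) (ηB : Matrix (Fin k) (Fin k) ℂ)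
    (hηA : (-ηA).PosDef) (hηB : (-ηB).PosDef)
    (ψ : Fin m × Fin k → ℂ)
    (hψ : star ψ ⬝ᵥ (ηA ⊗ₖ ηB).mulVec ψ ≠ 0) :
    let TA : Matrix (Fin m) (Fin m) ℂ :=
      (star ψ ⬝ᵥ (ηA ⊗ₖ ηB).mulVec ψ)⁻¹ •
        trB (vecMulVec ψ (star ψ) * (ηA ⊗ₖ ηB))
    ∀ μ ∈ spectrum ℂ TA, ∃ r : ℝ, 0 ≤ r ∧ μ = (r : ℂ) :=
  eigenvalues_nonneg_of_negDef_factors_general ηA ηB hηA hηB ψ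
end
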